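/- arXiv:2102.07316 — 2 statements merged into one kernel-verified Lean document; each statement's English description precedes it below -/
import Mathlib

section
/- If $(d^*, b^*, \lambda^*)$ is a generalized Nash equilibrium of the energy sharing game, then $d^*$ is the unique optimal solution of the centralized dispatch problem, and $\lambda^*$ equals the corresponding Lagrange multiplier vector of the power balance constraints. -/
open Finset

/-!
Since `p^out* - b* = -a λ*` with `a > 0`, the operator's variational inequality says that
every balanced admissible dispatch is weakly costlier than `d*` at the prices `λ*`; adding the users' variational inequalities then gives weak duality, i.e.
optimality of `d*`. The objective is strictly convex and the feasible set convex, so the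
minimizer is unique.
-/

lemma StrictConvexOn.lt_of_isMinOn {E : Type*} [AddCommMonoid E] [SMul ℝ E] {s : Set E}
    {F : E → ℝ} {x y : E} (hF : StrictConvexOn ℝ s F) (hmin : IsMinOn F s x) (hx : x ∈ s)
    (hy : y ∈ s) (hyx : y ≠ x) : F x < F y :=
  (hmin hy).lt_of_ne fun h => hyx <| hF.eq_of_isMinOn (fun _ hz => h ▸ hmin hz) hmin hy hx

lemma strictConvexOn_sum_apply {ι : Type*} [Fintype ι] {s : ι → Set ℝ} {f : ι → ℝ → ℝ}
    (hf : ∀ k, StrictConvexOn ℝ (s k) (f k)) :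
    StrictConvexOn ℝ (Set.univ.pi s) fun x : ι → ℝ => ∑ k, f k (x k) := by
  refine ⟨convex_pi fun k _ => (hf k).1, ?_⟩
  intro x hx y hy hxy a b ha hb hab
  obtain ⟨k₀, hk₀⟩ := Function.ne_iff.mp hxy
  simp only [Pi.add_apply, Pi.smul_apply, smul_eq_mul, mul_sum, ← sum_add_distrib]
  refine sum_lt_sum (fun k _ => ?_) ⟨k₀, mem_univ _, ?_⟩
  · exact (hf k).convexOn.2 (hx k trivial) (hy k trivial) ha.le hb.le hab
  · exact (hf k₀).2 (hx k₀ trivial) (hy k₀ trivial) hk₀ ha hb hab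

section Dispatch

variable {ι : Type*} [Fintype ι]

/-- Feasible set of the centralized dispatch problem: `p^out = Df + d - w` must lie in `𝒴`. -/
def dispatchFeasible (D : ι → Set ℝ) (P : Set (ι → ℝ)) (Df w : ι → ℝ) : Set (ι → ℝ) :=
  {d | (∀ k, d k ∈ D k) ∧ ∑ k, (Df k + d k - w k) = 0 ∧ (fun k => Df k + d k - w k) ∈ P}

lemma convex_dispatchFeasible {D : ι → Set ℝ} {P : Set (ι → ℝ)} (Df w : ι → ℝ)
    (hD : ∀ k, Convex ℝ (D k)) (hP : Convex ℝ P) : Convex ℝ (dispatchFeasible D P Df w) := by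
  intro x ⟨hxD, hxsum, hxP⟩ y ⟨hyD, hysum, hyP⟩ s t hs ht hst
  have hcomb : ∀ k, Df k + (s • x + t • y) k - w k
      = s * (Df k + x k - w k) + t * (Df k + y k - w k) := fun k => by
    simp only [Pi.add_apply, Pi.smul_apply, smul_eq_mul]
    linear_combination (w k - Df k) * hst
  refine ⟨fun k => hD k (hxD k) (hyD k) hs ht hst, ?_, ?_⟩
  · simp only [hcomb, sum_add_distrib, ← mul_sum, hxsum, hysum, mul_zero, add_zero]
  · convert hP hxP hyP hs ht hst using 1
    funext k
    exact hcomb k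

end Dispatch

lemma sum_sub_mul_nonpos_of_variational {ι : Type*} [Fintype ι] {a : ℝ} (ha : 0 < a)
    {p q b lam : ι → ℝ} (hq : ∀ k, q k - b k = -a * lam k)
    (hVI : ∑ k, (p k - q k) * (q k - b k) ≥ 0) : ∑ k, (p k - q k) * lam k ≤ 0 := by
  have hscale : ∑ k, (p k - q k) * (q k - b k) = -a * ∑ k, (p k - q k) * lam k := by
    simp only [hq, mul_sum]
    exact sum_congr rfl fun k _ => by ring
  nlinarith

lemma sum_le_sum_of_variational {ι : Type*} [Fintype ι] {f : ι → ℝ → ℝ} {x xstar lam : ι → ℝ}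
    (hVI : ∀ k, f k (x k) - f k (xstar k) + (x k - xstar k) * lam k ≥ 0)
    (hlam : ∑ k, (x k - xstar k) * lam k ≤ 0) : ∑ k, f k (xstar k) ≤ ∑ k, f k (x k) := by
  have hsum := sum_nonneg fun k (_ : k ∈ univ) => hVI k
  rw [sum_add_distrib, sum_sub_distrib] at hsum
  linarith

theorem gne_implies_centralized_optimal_general (n : ℕ) (a : ℝ) (ha : 0 < a)
    (f : Fin n → ℝ → ℝ) (Dset : Fin n → Set ℝ) (P : Set (Fin n → ℝ))
    (Df w : Fin n → ℝ)
    (hf : ∀ k, StrictConvexOn ℝ Set.univ (f k))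
    (hD : ∀ k, Convex ℝ (Dset k))
    (hP : Convex ℝ P)
    (dstar bstar lamstar : Fin n → ℝ)
    -- (d*, b*, λ*) is a GNE:
    (hdD : ∀ k, dstar k ∈ Dset k)
    -- self-balance: p^out* k = -a λ* k + b* k = Df k + d* k - w k
    (hbal : ∀ k, -a * lamstar k + bstar k = Df k + dstar k - w k)
    -- operator feasibility: p^out* ∈ 𝒴
    (hsum : (∑ k, (-a * lamstar k + bstar k)) = 0)
    (hmem : (fun k => -a * lamstar k + bstar k) ∈ P)
    -- users' variational inequality (A.2)
    (hVIuser : ∀ k, ∀ x ∈ Dset k, f k x - f k (dstar k) + (x - dstar k) * lamstar k ≥ 0)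
    -- operator's variational inequality (A.3)
    (hVIop : ∀ p : Fin n → ℝ, (∑ k, p k) = 0 → p ∈ P →
      ∑ k, (p k - (-a * lamstar k + bstar k)) * ((-a * lamstar k + bstar k) - bstar k) ≥ 0) :
    -- d* is feasible for the centralized problem,
    ((∀ k, dstar k ∈ Dset k) ∧ (∑ k, (Df k + dstar k - w k)) = 0 ∧
      (fun k => Df k + dstar k - w k) ∈ P) ∧
    -- d* is optimal,
    (∀ d : Fin n → ℝ, (∀ k, d k ∈ Dset k) →
      (∑ k, (Df k + d k - w k)) = 0 → (fun k => Df k + d k - w k) ∈ P →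
      ∑ k, f k (dstar k) ≤ ∑ k, f k (d k)) ∧
    -- and d* is the unique optimal solution,
    (∀ d : Fin n → ℝ, (∀ k, d k ∈ Dset k) →
      (∑ k, (Df k + d k - w k)) = 0 → (fun k => Df k + d k - w k) ∈ P →
      d ≠ dstar → ∑ k, f k (dstar k) < ∑ k, f k (d k)) ∧
    -- λ* is the corresponding Lagrange multiplier vector (saddle conditions (A.5a),(A.5b))
    (∀ k, ∀ x ∈ Dset k, f k x - f k (dstar k) + (x - dstar k) * lamstar k ≥ 0) ∧
    (∀ p : Fin n → ℝ, (∑ k, p k) = 0 → p ∈ P →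
      -(∑ k, (p k - (Df k + dstar k - w k)) * lamstar k) ≥ 0) := by
  have hpout : (fun k => -a * lamstar k + bstar k) = fun k => Df k + dstar k - w k :=
    funext hbal
  have hfeas : dstar ∈ dispatchFeasible Dset P Df w := ⟨hdD, hpout ▸ hsum, hpout ▸ hmem⟩
  have hmult : ∀ p : Fin n → ℝ, (∑ k, p k) = 0 → p ∈ P →
      -(∑ k, (p k - (Df k + dstar k - w k)) * lamstar k) ≥ 0 := fun p hp hpP =>
    neg_nonneg.mpr <| sum_sub_mul_nonpos_of_variational ha (b := bstar) (fun k => by linarith [hbal k])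
      (by simpa only [hbal] using hVIop p hp hpP)
  have hmin : IsMinOn (fun d => ∑ k, f k (d k)) (dispatchFeasible Dset P Df w) dstar :=
    fun d ⟨hd, hdsum, hdP⟩ => sum_le_sum_of_variational (fun k => hVIuser k _ (hd k)) <| by
      simpa only [add_sub_add_left_eq_sub, sub_sub_sub_cancel_right, neg_nonneg]
        using hmult _ hdsum hdP
  have hstrict := strictConvexOn_sum_apply hf
  rw [Set.pi_univ] at hstrict
  refine ⟨hfeas, fun d hd hdsum hdP => hmin ⟨hd, hdsum, hdP⟩, ?_, hVIuser, hmult⟩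
  exact fun d hd hdsum hdP hne => (hstrict.subset (Set.subset_univ _)
    (convex_dispatchFeasible Df w hD hP)).lt_of_isMinOn hmin hfeas ⟨hd, hdsum, hdP⟩ hne

/-- Proposition 1 (uniqueness direction): if `(d*, b*, λ*)` is a GNE of the energy sharing
game, then `d*` is the unique optimal solution of the centralized dispatch problem and `λ*`
is the corresponding Lagrange multiplier vector of the power-balance constraints
(characterized by the saddle-point conditions). -/
theorem gne_implies_centralized_optimal (n : ℕ) (a : ℝ) (ha : 0 < a)
    (f : Fin n → ℝ → ℝ) (Dset : Fin n → Set ℝ) (P : Set (Fin n → ℝ))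
    (Df w : Fin n → ℝ)
    (hf : ∀ k, StrictConvexOn ℝ Set.univ (f k))
    (hf2 : ∀ k, ContDiff ℝ 2 (f k))
    (hD : ∀ k, Convex ℝ (Dset k)) (hDc : ∀ k, IsClosed (Dset k))
    (hP : Convex ℝ P) (hPc : IsClosed P)
    (dstar bstar lamstar : Fin n → ℝ)
    -- (d*, b*, λ*) is a GNE:
    (hdD : ∀ k, dstar k ∈ Dset k)
    -- self-balance: p^out* k = -a λ* k + b* k = Df k + d* k - w k
    (hbal : ∀ k, -a * lamstar k + bstar k = Df k + dstar k - w k)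
    -- operator feasibility: p^out* ∈ 𝒴
    (hsum : (∑ k, (-a * lamstar k + bstar k)) = 0)
    (hmem : (fun k => -a * lamstar k + bstar k) ∈ P)
    -- users' variational inequality (A.2)
    (hVIuser : ∀ k, ∀ x ∈ Dset k, f k x - f k (dstar k) + (x - dstar k) * lamstar k ≥ 0)
    -- operator's variational inequality (A.3)
    (hVIop : ∀ p : Fin n → ℝ, (∑ k, p k) = 0 → p ∈ P →
      ∑ k, (p k - (-a * lamstar k + bstar k)) * ((-a * lamstar k + bstar k) - bstar k) ≥ 0) :
    -- d* is feasible for the centralized problem,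
    ((∀ k, dstar k ∈ Dset k) ∧ (∑ k, (Df k + dstar k - w k)) = 0 ∧
      (fun k => Df k + dstar k - w k) ∈ P) ∧
    -- d* is optimal,
    (∀ d : Fin n → ℝ, (∀ k, d k ∈ Dset k) →
      (∑ k, (Df k + d k - w k)) = 0 → (fun k => Df k + d k - w k) ∈ P →
      ∑ k, f k (dstar k) ≤ ∑ k, f k (d k)) ∧
    -- and d* is the unique optimal solution,
    (∀ d : Fin n → ℝ, (∀ k, d k ∈ Dset k) →
      (∑ k, (Df k + d k - w k)) = 0 → (fun k => Df k + d k - w k) ∈ P →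
      d ≠ dstar → ∑ k, f k (dstar k) < ∑ k, f k (d k)) ∧
    -- λ* is the corresponding Lagrange multiplier vector (saddle conditions (A.5a),(A.5b))
    (∀ k, ∀ x ∈ Dset k, f k x - f k (dstar k) + (x - dstar k) * lamstar k ≥ 0) ∧
    (∀ p : Fin n → ℝ, (∑ k, p k) = 0 → p ∈ P →
      -(∑ k, (p k - (Df k + dstar k - w k)) * lamstar k) ≥ 0) :=
  gne_implies_centralized_optimal_general n a ha f Dset P Df w hf hD hP dstar bstar lamstar hdD hbal
    hsum hmem hVIuser hVIop
end

section
/- (Strict convexity yields unique GNE demand profile) Any two generalized Nash equilibria $(d^1, b^1, \lambda^1)$ and $(d^2, b^2, \lambda^2)$ of the energy sharing game have the same demand profile: $d^1 = d^2$. -/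
/-!
Write `qᵢ = -a λᵢ + bᵢ` for the net loads of the two equilibria. By the balance equations
`q₂ - q₁ = d₂ - d₁`, and `qᵢ - bᵢ = -a λᵢ`, so testing each operator's variational inequality
at the other equilibrium and adding gives `∑ₖ (d₂ₖ - d₁ₖ)(λ₁ₖ - λ₂ₖ) ≤ 0`. Each user `k` minimises
`fₖ(x) + x λᵢₖ` over `Dₖ`, and adding the two optimality conditions shows that every summand is
nonnegative, hence zero. A vanishing summand makes `d₂ₖ` a second minimiser of the strictly
convex `fₖ(x) + x λ₁ₖ`, so `d₂ₖ = d₁ₖ`.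
-/

open Finset

section UserOptimality

variable {D : Set ℝ} {f : ℝ → ℝ} {x y μ ν : ℝ}

lemma isMinOn_add_mul_of_forall_sub_nonneg (h : ∀ z ∈ D, f z - f x + (z - x) * μ ≥ 0) :
    IsMinOn (fun z => f z + z * μ) D x :=
  isMinOn_iff.2 fun z hz => by linarith [h z hz]

lemma sub_mul_sub_nonneg_of_isMinOn (hx : x ∈ D) (hy : y ∈ D)
    (hxμ : IsMinOn (fun z => f z + z * μ) D x) (hyν : IsMinOn (fun z => f z + z * ν) D y) :
    0 ≤ (y - x) * (μ - ν) := by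
  have h₁ : f x + x * μ ≤ f y + y * μ := hxμ hy
  have h₂ : f y + y * ν ≤ f x + x * ν := hyν hx
  linear_combination h₁ + h₂

lemma StrictConvexOn.eq_of_isMinOn_of_sub_mul_sub_nonpos (hf : StrictConvexOn ℝ D f)
    (hx : x ∈ D) (hy : y ∈ D)
    (hxμ : IsMinOn (fun z => f z + z * μ) D x) (hyν : IsMinOn (fun z => f z + z * ν) D y)
    (h : (y - x) * (μ - ν) ≤ 0) : x = y := by
  have hg : StrictConvexOn ℝ D (fun z => f z + z * μ) :=
    hf.add_convexOn ((LinearMap.mulRight ℝ μ).convexOn hf.1)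
  have hyμ : IsMinOn (fun z => f z + z * μ) D y := isMinOn_iff.2 fun z hz => by
    have h₂ : f y + y * ν ≤ f x + x * ν := hyν hx
    have h₃ : f x + x * μ ≤ f z + z * μ := hxμ hz
    linear_combination h₃ + h + h₂
  exact hg.eq_of_isMinOn hxμ hyμ hx hy

end UserOptimality

lemma sum_sub_mul_sub_nonpos_of_operator_optimal {ι : Type*} [Fintype ι] {a : ℝ} (ha : 0 < a)
    {d₁ d₂ lam₁ lam₂ b₁ b₂ : ι → ℝ}
    (hq : ∀ k, (-a * lam₂ k + b₂ k) - (-a * lam₁ k + b₁ k) = d₂ k - d₁ k)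
    (h₁ : ∑ k, ((-a * lam₂ k + b₂ k) - (-a * lam₁ k + b₁ k)) * ((-a * lam₁ k + b₁ k) - b₁ k) ≥ 0)
    (h₂ : ∑ k, ((-a * lam₁ k + b₁ k) - (-a * lam₂ k + b₂ k)) * ((-a * lam₂ k + b₂ k) - b₂ k) ≥ 0) :
    ∑ k, (d₂ k - d₁ k) * (lam₁ k - lam₂ k) ≤ 0 := by
  have hsum : ∑ k, ((-a * lam₂ k + b₂ k) - (-a * lam₁ k + b₁ k)) * ((-a * lam₁ k + b₁ k) - b₁ k)
      + ∑ k, ((-a * lam₁ k + b₁ k) - (-a * lam₂ k + b₂ k)) * ((-a * lam₂ k + b₂ k) - b₂ k)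
      = -a * ∑ k, (d₂ k - d₁ k) * (lam₁ k - lam₂ k) := by
    rw [← sum_add_distrib, mul_sum]
    refine sum_congr rfl fun k _ => ?_
    linear_combination (-a * lam₁ k + a * lam₂ k) * hq k
  nlinarith

theorem gne_demand_unique_general (n : ℕ) (a : ℝ) (ha : 0 < a)
    (f : Fin n → ℝ → ℝ) (Dset : Fin n → Set ℝ) (P : Set (Fin n → ℝ))
    (Df w : Fin n → ℝ)
    (hf : ∀ k, StrictConvexOn ℝ Set.univ (f k))
    (hD : ∀ k, Convex ℝ (Dset k))
    (d₁ b₁ lam₁ d₂ b₂ lam₂ : Fin n → ℝ)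
    -- (d¹, b¹, λ¹) is a GNE:
    (h₁D : ∀ k, d₁ k ∈ Dset k)
    (h₁bal : ∀ k, -a * lam₁ k + b₁ k = Df k + d₁ k - w k)
    (h₁sum : (∑ k, (-a * lam₁ k + b₁ k)) = 0)
    (h₁mem : (fun k => -a * lam₁ k + b₁ k) ∈ P)
    (h₁user : ∀ k, ∀ x ∈ Dset k, f k x - f k (d₁ k) + (x - d₁ k) * lam₁ k ≥ 0)
    (h₁op : ∀ q : Fin n → ℝ, (∑ k, q k) = 0 → q ∈ P →
      ∑ k, (q k - (-a * lam₁ k + b₁ k)) * ((-a * lam₁ k + b₁ k) - b₁ k) ≥ 0)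
    -- (d², b², λ²) is a GNE:
    (h₂D : ∀ k, d₂ k ∈ Dset k)
    (h₂bal : ∀ k, -a * lam₂ k + b₂ k = Df k + d₂ k - w k)
    (h₂sum : (∑ k, (-a * lam₂ k + b₂ k)) = 0)
    (h₂mem : (fun k => -a * lam₂ k + b₂ k) ∈ P)
    (h₂user : ∀ k, ∀ x ∈ Dset k, f k x - f k (d₂ k) + (x - d₂ k) * lam₂ k ≥ 0)
    (h₂op : ∀ q : Fin n → ℝ, (∑ k, q k) = 0 → q ∈ P →
      ∑ k, (q k - (-a * lam₂ k + b₂ k)) * ((-a * lam₂ k + b₂ k) - b₂ k) ≥ 0) :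
    d₁ = d₂ := by
  have hmin₁ k := isMinOn_add_mul_of_forall_sub_nonneg (h₁user k)
  have hmin₂ k := isMinOn_add_mul_of_forall_sub_nonneg (h₂user k)
  have hop : ∑ k, (d₂ k - d₁ k) * (lam₁ k - lam₂ k) ≤ 0 :=
    sum_sub_mul_sub_nonpos_of_operator_optimal ha (fun k => by linarith [h₁bal k, h₂bal k])
      (h₁op _ h₂sum h₂mem) (h₂op _ h₁sum h₁mem)
  have huser : ∀ k ∈ univ, 0 ≤ (d₂ k - d₁ k) * (lam₁ k - lam₂ k) := fun k _ =>
    sub_mul_sub_nonneg_of_isMinOn (h₁D k) (h₂D k) (hmin₁ k) (hmin₂ k)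
  have hzero := (sum_eq_zero_iff_of_nonneg huser).1 (le_antisymm hop (sum_nonneg huser))
  funext k
  exact ((hf k).subset (Set.subset_univ _) (hD k)).eq_of_isMinOn_of_sub_mul_sub_nonpos
    (h₁D k) (h₂D k) (hmin₁ k) (hmin₂ k) (hzero k (mem_univ k)).le

/-- Strict convexity yields a unique GNE demand profile: any two generalized Nash
equilibria `(d¹, b¹, λ¹)` and `(d², b², λ²)` of the energy sharing game have the same
demand profile `d¹ = d²`. -/
theorem gne_demand_unique (n : ℕ) (a : ℝ) (ha : 0 < a)
    (f : Fin n → ℝ → ℝ) (Dset : Fin n → Set ℝ) (P : Set (Fin n → ℝ))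
    (Df w : Fin n → ℝ)
    (hf : ∀ k, StrictConvexOn ℝ Set.univ (f k))
    (hf2 : ∀ k, ContDiff ℝ 2 (f k))
    (hD : ∀ k, Convex ℝ (Dset k)) (hDc : ∀ k, IsClosed (Dset k))
    (hP : Convex ℝ P) (hPc : IsClosed P)
    (d₁ b₁ lam₁ d₂ b₂ lam₂ : Fin n → ℝ)
    -- (d¹, b¹, λ¹) is a GNE:
    (h₁D : ∀ k, d₁ k ∈ Dset k)
    (h₁bal : ∀ k, -a * lam₁ k + b₁ k = Df k + d₁ k - w k)
    (h₁sum : (∑ k, (-a * lam₁ k + b₁ k)) = 0)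
    (h₁mem : (fun k => -a * lam₁ k + b₁ k) ∈ P)
    (h₁user : ∀ k, ∀ x ∈ Dset k, f k x - f k (d₁ k) + (x - d₁ k) * lam₁ k ≥ 0)
    (h₁op : ∀ q : Fin n → ℝ, (∑ k, q k) = 0 → q ∈ P →
      ∑ k, (q k - (-a * lam₁ k + b₁ k)) * ((-a * lam₁ k + b₁ k) - b₁ k) ≥ 0)
    -- (d², b², λ²) is a GNE:
    (h₂D : ∀ k, d₂ k ∈ Dset k)
    (h₂bal : ∀ k, -a * lam₂ k + b₂ k = Df k + d₂ k - w k)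
    (h₂sum : (∑ k, (-a * lam₂ k + b₂ k)) = 0)
    (h₂mem : (fun k => -a * lam₂ k + b₂ k) ∈ P)
    (h₂user : ∀ k, ∀ x ∈ Dset k, f k x - f k (d₂ k) + (x - d₂ k) * lam₂ k ≥ 0)
    (h₂op : ∀ q : Fin n → ℝ, (∑ k, q k) = 0 → q ∈ P →
      ∑ k, (q k - (-a * lam₂ k + b₂ k)) * ((-a * lam₂ k + b₂ k) - b₂ k) ≥ 0) :
    d₁ = d₂ :=
  gne_demand_unique_general n a ha f Dset P Df w hf hD d₁ b₁ lam₁ d₂ b₂ lam₂ h₁D h₁bal h₁sum h₁mem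
    h₁user h₁op h₂D h₂bal h₂sum h₂mem h₂user h₂op
end
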